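/- arXiv:2605.29880 — 6 statements merged into one kernel-verified Lean document; each statement's English description precedes it below -/
import Mathlib

section
/- Let (S,⊔,0) be a semilattice frame and define · : S×S → 𝒫(S) by x·y := {x ⊔ y} and N := {0}. Then (S,·,N) is a Routley–Meyer frame (it satisfies reflexivity, transitivity, upset and down-down-up), and it moreover satisfies, for all x,y,z ∈ S: (h) x·y ⊆ x·(x·y); (p) (x·y)·z ⊆ x·(y·z); (s) (x·y)·z ⊆ y·(x·z); x ∈ x·x; x·y ⊆ (x·y)·y; x ∈ x·N; x·y ⊆ y·x; and x·x ⊆ N·x. In particular, every semilattice frame is a Routley–Meyer set frame. -/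
/-- The preorder `x ≤ y` defined by `∃ n ∈ N, y ∈ n·x`. -/
def RMle {K : Type*} (op : K → K → Set K) (N : Set K) (x y : K) : Prop :=
  ∃ n ∈ N, y ∈ op n x

/-- The Routley–Meyer frame conditions: reflexivity, transitivity, upset, down-down-up. -/
def IsRM {K : Type*} (op : K → K → Set K) (N : Set K) : Prop :=
  (∀ x, RMle op N x x) ∧
  (∀ x y z, RMle op N x y → RMle op N y z → RMle op N x z) ∧
  (∀ n m, n ∈ N → RMle op N n m → m ∈ N) ∧
  (∀ x y z x' y' z', z ∈ op x y → RMle op N x' x → RMle op N y' y → RMle op N z z' →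
    z' ∈ op x' y')

/-- `x·Y = ⋃ y ∈ Y, x·y`. -/
def setL {K : Type*} (op : K → K → Set K) (x : K) (Y : Set K) : Set K :=
  ⋃ y ∈ Y, op x y

/-- `X·y = ⋃ x ∈ X, x·y`. -/
def setR {K : Type*} (op : K → K → Set K) (X : Set K) (y : K) : Set K :=
  ⋃ x ∈ X, op x y

/-- A Routley–Meyer set frame: a Routley–Meyer frame satisfying (h), (p), (s),
`x ∈ x·x`, `x·y ⊆ (x·y)·y`, `x ∈ x·N`, `x·y ⊆ y·x` and `x·x ⊆ N·x`. -/
def IsSetFrame {K : Type*} (op : K → K → Set K) (N : Set K) : Prop :=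
  IsRM op N ∧
  (∀ x y : K, op x y ⊆ setL op x (op x y)) ∧
  (∀ x y z : K, setR op (op x y) z ⊆ setL op x (op y z)) ∧
  (∀ x y z : K, setR op (op x y) z ⊆ setL op y (op x z)) ∧
  (∀ x : K, x ∈ op x x) ∧
  (∀ x y : K, op x y ⊆ setR op (op x y) y) ∧
  (∀ x : K, x ∈ setL op x N) ∧
  (∀ x y : K, op x y ⊆ op y x) ∧
  (∀ x : K, op x x ⊆ setR op N x)

/-- The operation `x·y := {x ⊔ y}` induced by a semilattice frame. -/
def semOp {S : Type*} (sup : S → S → S) : S → S → Set S := fun x y => {sup x y}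

/-! Since `0` is a unit, `0·x = {x}`, so the order `≤` is equality and the Routley–Meyer
conditions hold trivially. All products are singletons, so each remaining inclusion compares two
singletons and reduces to an identity of the semilattice. -/

section RoutleyMeyer

variable {K : Type*} (op : K → K → Set K)

theorem setL_singleton (x y : K) : setL op x {y} = op x y := by
  simp [setL]

theorem setR_singleton (x y : K) : setR op {x} y = op x y := by
  simp [setR]

theorem isRM_of_RMle_iff_eq {N : Set K} (h : ∀ x y, RMle op N x y ↔ y = x) : IsRM op N := by
  refine ⟨fun x => (h x x).2 rfl, ?_, ?_, ?_⟩
  · intro x y w hxy hyw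
    rw [h] at hxy hyw ⊢
    rw [hyw, hxy]
  · intro n m hn hnm
    rwa [(h n m).1 hnm]
  · intro x y w x' y' w' hw hx hy hw'
    rw [h] at hx hy hw'
    subst hx hy hw'
    exact hw

end RoutleyMeyer

section Semilattice

variable {S : Type*} (sup : S → S → S)

theorem mem_semOp {x y w : S} : w ∈ semOp sup x y ↔ w = sup x y := Iff.rfl

theorem semOp_subset_semOp {x y x' y' : S} :
    semOp sup x y ⊆ semOp sup x' y' ↔ sup x y = sup x' y' :=
  Set.singleton_subset_singleton

theorem setL_semOp (x y w : S) : setL (semOp sup) x (semOp sup y w) = semOp sup x (sup y w) :=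
  setL_singleton _ x _

theorem setR_semOp (x y w : S) : setR (semOp sup) (semOp sup x y) w = semOp sup (sup x y) w :=
  setR_singleton _ _ w

theorem RMle_semOp_iff {z : S} (hident : ∀ x, sup z x = x) (x y : S) :
    RMle (semOp sup) {z} x y ↔ y = x := by
  simp [RMle, mem_semOp, hident]

end Semilattice

/-- every semilattice frame, viewed as `(S, ·, N)` with `x·y = {x ⊔ y}`
and `N = {0}`, is a Routley–Meyer frame satisfying (h), (p), (s), `x ∈ x·x`,
`x·y ⊆ (x·y)·y`, `x ∈ x·N`, `x·y ⊆ y·x` and `x·x ⊆ N·x`; in particular it is a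
Routley–Meyer set frame. -/
theorem semilattice_isSetFrame {S : Type*} (sup : S → S → S) (z : S)
    (hcomm : ∀ x y, sup x y = sup y x)
    (hassoc : ∀ x y w, sup (sup x y) w = sup x (sup y w))
    (hidem : ∀ x, sup x x = x)
    (hident : ∀ x, sup z x = x) :
    IsSetFrame (semOp sup) {z} := by
  refine ⟨isRM_of_RMle_iff_eq _ (RMle_semOp_iff sup hident), fun x y => ?_, fun x y w => ?_,
    fun x y w => ?_, fun x => ?_, fun x y => ?_, fun x => ?_, fun x y => ?_, fun x => ?_⟩ <;>
    simp only [setL_semOp, setR_semOp, setL_singleton, setR_singleton, semOp_subset_semOp,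
      mem_semOp]
  · rw [← hassoc, hidem]
  · exact hassoc ..
  · rw [← hassoc, hcomm x y]
  · exact (hidem _).symm
  · rw [hassoc, hidem]
  · rw [hcomm, hident]
  · exact hcomm ..
  · rw [hident, hidem]
end

section
/- For any finite set W of Wang tiles, the following are equivalent: (1) W tiles ℤ²; (2) W tiles ℕ²; (3) for all k ∈ ℕ, W tiles the k-quadrant ℚ(k); (4) for all k ∈ ℕ, W tiles the k-octant 𝕆(k). -/
/-- A Wang tile: a quadruple `(t_W, t_E, t_N, t_S)` of natural numbers. -/
abbrev Tile : Type := ℕ × ℕ × ℕ × ℕ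

/-- West colour. -/
def tW (t : Tile) : ℕ := t.1
/-- East colour. -/
def tE (t : Tile) : ℕ := t.2.1
/-- North colour. -/
def tN (t : Tile) : ℕ := t.2.2.1
/-- South colour. -/
def tS (t : Tile) : ℕ := t.2.2.2

/-- `W` tiles `D ⊆ ℤ²`: there is a map assigning to each point of `D` a tile of `W`
such that horizontally and vertically adjacent tiles within `D` match. -/
def Tiles (W : Finset Tile) (D : Set (ℤ × ℤ)) : Prop :=
  ∃ τ : ℤ × ℤ → Tile,
    (∀ p ∈ D, τ p ∈ W) ∧
    (∀ m n : ℤ, (m, n) ∈ D → (m + 1, n) ∈ D → tE (τ (m, n)) = tW (τ (m + 1, n))) ∧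
    (∀ m n : ℤ, (m, n) ∈ D → (m, n + 1) ∈ D → tN (τ (m, n)) = tS (τ (m, n + 1)))

/-- The `k`-quadrant `ℚ(k) = {(m,n) : 0 ≤ m,n ≤ k}`. -/
def Quadrant (k : ℕ) : Set (ℤ × ℤ) :=
  {p | 0 ≤ p.1 ∧ p.1 ≤ (k : ℤ) ∧ 0 ≤ p.2 ∧ p.2 ≤ (k : ℤ)}

/-- The `k`-octant `𝕆(k) = {(m,n) : 0 ≤ m ≤ n ≤ k}`. -/
def Octant (k : ℕ) : Set (ℤ × ℤ) :=
  {p | 0 ≤ p.1 ∧ p.1 ≤ p.2 ∧ p.2 ≤ (k : ℤ)}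

/-!
Restriction and translation preserve tileability, so (1) ⇒ (2) ⇒ (3) ⇒ (4) are immediate, and
(4) ⇒ (3) because `ℚ(k)` shifted up by `k` lies in `𝕆(2k)`. For (3) ⇒ (1), every finite subset of
`ℤ²` lies in a translate of some `ℚ(k)`, and a compactness argument (an ultrafilter limit of
tilings of ever larger finite sets, using that `W` is finite) tiles the whole plane.
-/

open Filter

section

variable {W : Finset Tile} {D : Set (ℤ × ℤ)}

theorem Tiles.mono {D' : Set (ℤ × ℤ)} (h : Tiles W D) (hsub : D' ⊆ D) : Tiles W D' := by
  obtain ⟨τ, hW, hE, hN⟩ := h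
  exact ⟨τ, fun p hp => hW p (hsub hp), fun m n ha hb => hE m n (hsub ha) (hsub hb),
    fun m n ha hb => hN m n (hsub ha) (hsub hb)⟩

theorem Tiles.preimage_add (h : Tiles W D) (v : ℤ × ℤ) : Tiles W ((· + v) ⁻¹' D) := by
  obtain ⟨τ, hW, hE, hN⟩ := h
  obtain ⟨a, b⟩ := v
  refine ⟨fun p => τ (p + (a, b)), fun p hp => hW _ hp,
    fun m n hp hq => ?_, fun m n hp hq => ?_⟩
  all_goals
    simp only [Set.mem_preimage, Prod.mk_add_mk, add_right_comm _ (1 : ℤ)] at hp hq ⊢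
  · exact hE _ _ hp hq
  · exact hN _ _ hp hq

theorem tiles_of_forall_finite (h : ∀ F : Set (ℤ × ℤ), F.Finite → F ⊆ D → Tiles W F) :
    Tiles W D := by
  have hpieces : ∀ F : Finset (ℤ × ℤ), Tiles W (D ∩ F) := fun F =>
    h _ (F.finite_toSet.inter_of_right D) Set.inter_subset_left
  choose σ hσW hσE hσN using hpieces
  let u : Ultrafilter (Finset (ℤ × ℤ)) := .of atTop
  have hcontains (p : ℤ × ℤ) : ∀ᶠ F : Finset (ℤ × ℤ) in u, p ∈ F :=
    Ultrafilter.of_le atTop <| (eventually_ge_atTop ({p} : Finset (ℤ × ℤ))).mono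
      fun _ hF => hF (Finset.mem_singleton_self p)
  have hlimit (p : ℤ × ℤ) : ∃ t, p ∈ D → t ∈ W ∧ ∀ᶠ F : Finset (ℤ × ℤ) in u, σ F p = t := by
    by_cases hp : p ∈ D
    · obtain ⟨t, ht, hσt⟩ :=
        (u.eventually_exists_mem_iff (P := fun t F => σ F p = t) W.finite_toSet).1 <|
          (hcontains p).mono fun F hpF => ⟨σ F p, hσW F p ⟨hp, hpF⟩, rfl⟩
      exact ⟨t, fun _ => ⟨ht, hσt⟩⟩
    · exact ⟨default, fun h => absurd h hp⟩
  choose τ hτ using hlimit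
  have hagree : ∀ a ∈ D, ∀ b ∈ D,
      ∃ F : Finset (ℤ × ℤ), a ∈ D ∩ F ∧ b ∈ D ∩ F ∧ σ F a = τ a ∧ σ F b = τ b := by
    intro a ha b hb
    obtain ⟨F, haF, hbF, hFa, hFb⟩ :=
      ((hcontains a).and <| (hcontains b).and <| (hτ a ha).2.and (hτ b hb).2).exists
    exact ⟨F, ⟨ha, haF⟩, ⟨hb, hbF⟩, hFa, hFb⟩
  refine ⟨τ, fun p hp => (hτ p hp).1, fun m n ha hb => ?_, fun m n ha hb => ?_⟩
  · obtain ⟨F, haF, hbF, hFa, hFb⟩ := hagree _ ha _ hb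
    simpa only [hFa, hFb] using hσE F m n haF hbF
  · obtain ⟨F, haF, hbF, hFa, hFb⟩ := hagree _ ha _ hb
    simpa only [hFa, hFb] using hσN F m n haF hbF

end

theorem Set.Finite.exists_subset_preimage_add_quadrant {F : Set (ℤ × ℤ)} (hF : F.Finite) :
    ∃ (v : ℤ × ℤ) (k : ℕ), F ⊆ (· + v) ⁻¹' Quadrant k := by
  obtain ⟨a, ha⟩ := hF.bddAbove
  obtain ⟨b, hb⟩ := hF.bddBelow
  refine ⟨-b, (max (a.1 - b.1) (a.2 - b.2)).toNat, fun p hp => ?_⟩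
  obtain ⟨hpa₁, hpa₂⟩ := ha hp
  obtain ⟨hbp₁, hbp₂⟩ := hb hp
  simp only [Quadrant, Set.mem_preimage, Set.mem_ofPred_eq, Prod.fst_add, Prod.snd_add,
    Prod.fst_neg, Prod.snd_neg]
  omega

theorem quadrant_subset_preimage_add_octant (k : ℕ) :
    Quadrant k ⊆ (· + ((0 : ℤ), (k : ℤ))) ⁻¹' Octant (2 * k) := by
  rintro ⟨m, n⟩ ⟨hm₀, hmk, hn₀, hnk⟩
  simp only [Octant, Set.mem_preimage, Set.mem_ofPred_eq, Prod.mk_add_mk, add_zero]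
  omega

/-- for a finite tile set `W`, tiling the plane `ℤ²`, tiling the quadrant
`ℕ²`, tiling all finite quadrants `ℚ(k)` and tiling all finite octants `𝕆(k)` are
equivalent. -/
theorem tiles_tfae (W : Finset Tile) :
    List.TFAE
      [Tiles W Set.univ,
       Tiles W {p : ℤ × ℤ | 0 ≤ p.1 ∧ 0 ≤ p.2},
       ∀ k : ℕ, Tiles W (Quadrant k),
       ∀ k : ℕ, Tiles W (Octant k)] := by
  tfae_have 1 → 2 := fun h => h.mono (Set.subset_univ _)
  tfae_have 2 → 3 := fun h k => h.mono fun p hp => ⟨hp.1, hp.2.2.1⟩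
  tfae_have 3 → 4 := fun h k =>
    (h k).mono fun p hp => ⟨hp.1, hp.2.1.trans hp.2.2, hp.1.trans hp.2.1, hp.2.2⟩
  tfae_have 4 → 3 := fun h k =>
    ((h (2 * k)).preimage_add _).mono (quadrant_subset_preimage_add_octant k)
  tfae_have 3 → 1 := fun h => tiles_of_forall_finite fun _ hF _ => by
    obtain ⟨v, k, hsub⟩ := hF.exists_subset_preimage_add_quadrant
    exact ((h k).preimage_add v).mono hsub
  tfae_finish
end

section
/- Let K be a set and · : K×K → 𝒫(K) satisfy (h) x·y ⊆ x·(x·y) and (p) (x·y)·z ⊆ x·(y·z) for all x,y,z ∈ K. If there are elements g, a₁, b₁, …, aₙ, bₙ ∈ K such that a₁ ∈ g·b₁, a₂ ∈ a₁·b₂, a₃ ∈ a₂·b₃, …, aₙ ∈ aₙ₋₁·bₙ, then there are elements a₁', …, aₙ' ∈ K such that a₁' ∈ g·b₁, a₂' ∈ a₁'·b₂, …, aₙ' ∈ aₙ₋₁'·bₙ, and for all 1 ≤ i ≤ n, aᵢ ∈ g·aᵢ'. -/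
section

variable {K : Type*} {op : K → K → Set K}

theorem mem_setL {x z : K} {Y : Set K} : z ∈ setL op x Y ↔ ∃ y ∈ Y, z ∈ op x y := by
  simp [setL]

theorem mem_setR {y z : K} {X : Set K} : z ∈ setR op X y ↔ ∃ x ∈ X, z ∈ op x y := by
  simp [setR]

theorem exists_mem_op_of_mem_op (hH : ∀ x y : K, op x y ⊆ setL op x (op x y))
    {x y z : K} (hz : z ∈ op x y) : ∃ w ∈ op x y, z ∈ op x w :=
  mem_setL.1 (hH x y hz)

theorem exists_mem_op_of_mem_op_of_mem_op
    (hP : ∀ x y z : K, setR op (op x y) z ⊆ setL op x (op y z))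
    {x u v y z : K} (hu : u ∈ op x v) (hz : z ∈ op u y) : ∃ w ∈ op v y, z ∈ op x w :=
  mem_setL.1 (hP x v y (mem_setR.2 ⟨u, hu, hz⟩))

/-- Index `0` holds `g`, so that the first link `a₁' ∈ g·b₁` is the `i = 0` case of the
recursion `aᵢ₊₁' ∈ aᵢ'·bᵢ₊₁`. -/
noncomputable def parallelChain (op : K → K → Set K) (g : K) (a b : ℕ → K) : ℕ → K
  | 0 => g
  | i + 1 => @Classical.epsilon K ⟨g⟩ fun w =>
      w ∈ op (parallelChain op g a b i) (b (i + 1)) ∧ a (i + 1) ∈ op g w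

theorem parallelChain_succ_spec_of_exists {g : K} {a b : ℕ → K} {i : ℕ}
    (h : ∃ w, w ∈ op (parallelChain op g a b i) (b (i + 1)) ∧ a (i + 1) ∈ op g w) :
    parallelChain op g a b (i + 1) ∈ op (parallelChain op g a b i) (b (i + 1)) ∧
      a (i + 1) ∈ op g (parallelChain op g a b (i + 1)) :=
  Classical.epsilon_spec h

theorem parallelChain_succ_spec (hH : ∀ x y : K, op x y ⊆ setL op x (op x y))
    (hP : ∀ x y z : K, setR op (op x y) z ⊆ setL op x (op y z))
    {n : ℕ} {g : K} {a b : ℕ → K} (hbase : a 1 ∈ op g (b 1))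
    (hchain : ∀ i, 1 ≤ i → i < n → a (i + 1) ∈ op (a i) (b (i + 1))) :
    ∀ i, i < n → parallelChain op g a b (i + 1) ∈ op (parallelChain op g a b i) (b (i + 1)) ∧
      a (i + 1) ∈ op g (parallelChain op g a b (i + 1)) := by
  intro i hi
  induction i with
  | zero => exact parallelChain_succ_spec_of_exists (exists_mem_op_of_mem_op hH hbase)
  | succ i ih =>
    have ha : a (i + 1) ∈ op g (parallelChain op g a b (i + 1)) := (ih (by omega)).2
    exact parallelChain_succ_spec_of_exists
      (exists_mem_op_of_mem_op_of_mem_op hP ha (hchain (i + 1) (by omega) hi))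

end

/-- the chain lemma (Lemma 7). Under (h) and (p), any chain
`a₁ ∈ g·b₁, a₂ ∈ a₁·b₂, …, aₙ ∈ aₙ₋₁·bₙ` can be replaced by a parallel chain
`a₁' ∈ g·b₁, …, aₙ' ∈ aₙ₋₁'·bₙ` with `aᵢ ∈ g·aᵢ'` for all `1 ≤ i ≤ n`. -/
theorem chain_lemma {K : Type*} (op : K → K → Set K)
    (hH : ∀ x y : K, op x y ⊆ setL op x (op x y))
    (hP : ∀ x y z : K, setR op (op x y) z ⊆ setL op x (op y z))
    (n : ℕ) (hn : 1 ≤ n) (g : K) (a b : ℕ → K)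
    (hbase : a 1 ∈ op g (b 1))
    (hchain : ∀ i, 1 ≤ i → i < n → a (i + 1) ∈ op (a i) (b (i + 1))) :
    ∃ a' : ℕ → K,
      a' 1 ∈ op g (b 1) ∧
      (∀ i, 1 ≤ i → i < n → a' (i + 1) ∈ op (a' i) (b (i + 1))) ∧
      (∀ i, 1 ≤ i → i ≤ n → a i ∈ op g (a' i)) := by
  have spec := parallelChain_succ_spec hH hP hbase hchain
  refine ⟨parallelChain op g a b, (spec 0 hn).1, fun i _ hi => (spec i hi).1, ?_⟩
  rintro (_ | i) hi1 hin
  · omega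
  · exact (spec i hin).2
end

section
/- Let K be a set and · : K×K → 𝒫(K) satisfy (p) (x·y)·z ⊆ x·(y·z) and (s) (x·y)·z ⊆ y·(x·z) for all x,y,z ∈ K. Let k ≥ 1 and suppose there are elements d₀, …, d_k, h₁, …, h_k, x₁, …, x_k, y₁, …, y_k ∈ K with hᵢ ∈ dᵢ₋₁·xᵢ and dᵢ ∈ hᵢ·yᵢ for all 1 ≤ i ≤ k. Then there exist elements g_{i,j} ∈ K for all 0 ≤ i ≤ j ≤ k such that g_{i,i} = dᵢ for all 0 ≤ i ≤ k, g_{i+1,j} ∈ x_{i+1}·g_{i,j} whenever 0 ≤ i < i+1 ≤ j ≤ k, and g_{i,j+1} ∈ g_{i,j}·y_{j+1} whenever 0 ≤ i ≤ j < k. -/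
/-!
The octant is built column by column. Given column `n` (the points `g_{i,n}`, `i ≤ n`, linked
upwards by left multiplication with the `x_{i+1}`), the new top point `d_{n+1}` lies in
`(d_n·x_{n+1})·y_{n+1}`, so (s) places it in `x_{n+1}·c_n` for some `c_n ∈ d_n·y_{n+1}`. Going down
the column, `c_{i+1} ∈ g_{i+1,n}·y_{n+1} ⊆ (x_{i+1}·g_{i,n})·y_{n+1}`, and (p) gives
`c_i ∈ g_{i,n}·y_{n+1}` with `c_{i+1} ∈ x_{i+1}·c_i`. The points `c_i` form column `n+1`.
-/

section

variable {K : Type*} (op : K → K → Set K)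

lemma exists_mem_op_of_setR_subset_setL {X Y : Set K} {a c w z : K}
    (hXY : setR op X c ⊆ setL op a Y) (hw : w ∈ X) (hz : z ∈ op w c) :
    ∃ v ∈ Y, z ∈ op a v := by
  have hz' : z ∈ setR op X c := Set.mem_biUnion hw hz
  simpa [setL] using hXY hz'

/-- The shape of each column `g_{0,j}, …, g_{j,j}` of the octant. -/
def IsLeftChain (x : ℕ → K) (n : ℕ) (a : ℕ → K) : Prop :=
  ∀ i < n, a (i + 1) ∈ op (x (i + 1)) (a i)

def IsOctant (d x y : ℕ → K) (n : ℕ) (g : ℕ → ℕ → K) : Prop :=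
  (∀ i, i ≤ n → g i i = d i) ∧
    (∀ i j, i + 1 ≤ j → j ≤ n → g (i + 1) j ∈ op (x (i + 1)) (g i j)) ∧
    (∀ i j, i ≤ j → j < n → g i (j + 1) ∈ op (g i j) (y (j + 1)))

variable {op}

theorem IsLeftChain.update_succ {x : ℕ → K} {n : ℕ} {b : ℕ → K} (hb : IsLeftChain op x n b)
    {c : K} (hc : c ∈ op (x (n + 1)) (b n)) :
    IsLeftChain op x (n + 1) (Function.update b (n + 1) c) := by
  intro i hi
  rw [Function.update_of_ne (show i ≠ n + 1 by omega)]
  rcases (Nat.lt_succ_iff.mp hi).lt_or_eq with hi | rfl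
  · rw [Function.update_of_ne (by omega)]
    exact hb i hi
  · rwa [Function.update_self]

theorem IsLeftChain.exists_lift
    (hP : ∀ x y z : K, setR op (op x y) z ⊆ setL op x (op y z))
    {x : ℕ → K} {y : K} {n : ℕ} {a : ℕ → K} (ha : IsLeftChain op x n a)
    {c : K} (hc : c ∈ op (a n) y) :
    ∃ b : ℕ → K, b n = c ∧ (∀ i ≤ n, b i ∈ op (a i) y) ∧ IsLeftChain op x n b := by
  induction n generalizing c with
  | zero => exact ⟨fun _ => c, rfl, fun i hi => by rwa [Nat.le_zero.mp hi], fun i hi => by omega⟩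
  | succ n ih =>
    obtain ⟨c₀, hc₀, hcc₀⟩ :=
      exists_mem_op_of_setR_subset_setL op (hP _ _ _) (ha n n.lt_succ_self) hc
    obtain ⟨b, hbn, hb, hchain⟩ := ih (fun i hi => ha i (by omega)) hc₀
    refine ⟨Function.update b (n + 1) c, Function.update_self .., fun i hi => ?_,
      hchain.update_succ (by rwa [hbn])⟩
    rcases hi.lt_or_eq with hi | rfl
    · rw [Function.update_of_ne (by omega)]
      exact hb i (by omega)
    · rwa [Function.update_self]

variable {d x y : ℕ → K} {n : ℕ} {g : ℕ → ℕ → K}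

theorem isOctant_zero : IsOctant op d x y 0 fun _ _ => d 0 :=
  ⟨fun i hi => by rw [Nat.le_zero.mp hi], fun i j hij hj => by omega, fun i j hij hj => by omega⟩

theorem IsOctant.exists_next_column
    (hP : ∀ x y z : K, setR op (op x y) z ⊆ setL op x (op y z))
    (hS : ∀ x y z : K, setR op (op x y) z ⊆ setL op y (op x z))
    (hg : IsOctant op d x y n g) {e : K} (he : e ∈ op (d n) (x (n + 1)))
    (hd : d (n + 1) ∈ op e (y (n + 1))) :
    ∃ c : ℕ → K, c (n + 1) = d (n + 1) ∧ (∀ i ≤ n, c i ∈ op (g i n) (y (n + 1))) ∧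
      IsLeftChain op x (n + 1) c := by
  obtain ⟨hdiag, hvert, -⟩ := hg
  obtain ⟨cₙ, hcₙ, hdcₙ⟩ := exists_mem_op_of_setR_subset_setL op (hS _ _ _) he hd
  have hcol : IsLeftChain op x n (g · n) := fun i hi => hvert i n hi le_rfl
  obtain ⟨b, hbn, hb, hchain⟩ := hcol.exists_lift hP (c := cₙ) (by rwa [hdiag n le_rfl])
  refine ⟨Function.update b (n + 1) (d (n + 1)), Function.update_self .., fun i hi => ?_,
    hchain.update_succ (by rwa [hbn])⟩
  rw [Function.update_of_ne (by omega)]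
  exact hb i hi

theorem IsOctant.addColumn (hg : IsOctant op d x y n g) {c : ℕ → K}
    (hcn : c (n + 1) = d (n + 1)) (hc : ∀ i ≤ n, c i ∈ op (g i n) (y (n + 1)))
    (hchain : IsLeftChain op x (n + 1) c) :
    IsOctant op d x y (n + 1) fun i j => if j = n + 1 then c i else g i j := by
  obtain ⟨hdiag, hvert, hhor⟩ := hg
  refine ⟨fun i hi => ?_, fun i j hij hj => ?_, fun i j hij hj => ?_⟩
  · rcases hi.lt_or_eq with hi | rfl
    · simpa [hi.ne] using hdiag i (by omega)
    · simpa using hcn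
  · rcases hj.lt_or_eq with hj | rfl
    · simpa [hj.ne] using hvert i j hij (by omega)
    · simpa using hchain i (by omega)
  · rcases (Nat.lt_succ_iff.mp hj).lt_or_eq with hj | rfl
    · simpa [hj.ne, (hj.trans n.lt_succ_self).ne] using hhor i j hij hj
    · simpa using hc i hij

theorem exists_isOctant
    (hP : ∀ x y z : K, setR op (op x y) z ⊆ setL op x (op y z))
    (hS : ∀ x y z : K, setR op (op x y) z ⊆ setL op y (op x z))
    {h : ℕ → K} {k : ℕ} (hstair : ∀ i, i < k → h (i + 1) ∈ op (d i) (x (i + 1)) ∧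
      d (i + 1) ∈ op (h (i + 1)) (y (i + 1))) :
    ∀ n ≤ k, ∃ g, IsOctant op d x y n g := by
  intro n hn
  induction n with
  | zero => exact ⟨_, isOctant_zero⟩
  | succ n ih =>
    obtain ⟨g, hg⟩ := ih (by omega)
    obtain ⟨he, hd⟩ := hstair n hn
    obtain ⟨c, hcn, hc, hchain⟩ := hg.exists_next_column hP hS he hd
    exact ⟨_, hg.addColumn hcn hc hchain⟩

end

theorem octant_construction_general {K : Type*} (op : K → K → Set K)
    (hP : ∀ x y z : K, setR op (op x y) z ⊆ setL op x (op y z))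
    (hS : ∀ x y z : K, setR op (op x y) z ⊆ setL op y (op x z))
    (k : ℕ) (d h x y : ℕ → K)
    (hstair : ∀ i, i < k → h (i + 1) ∈ op (d i) (x (i + 1)) ∧
      d (i + 1) ∈ op (h (i + 1)) (y (i + 1))) :
    ∃ g : ℕ → ℕ → K,
      (∀ i, i ≤ k → g i i = d i) ∧
      (∀ i j, i + 1 ≤ j → j ≤ k → g (i + 1) j ∈ op (x (i + 1)) (g i j)) ∧
      (∀ i j, i ≤ j → j < k → g i (j + 1) ∈ op (g i j) (y (j + 1))) :=
  exists_isOctant hP hS hstair k le_rfl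

/-- from a lower staircase `hᵢ ∈ dᵢ₋₁·xᵢ`, `dᵢ ∈ hᵢ·yᵢ` (1 ≤ i ≤ k),
the conditions (p) and (s) produce a full octant of points `g_{i,j}` (0 ≤ i ≤ j ≤ k)
with `g_{i,i} = dᵢ`, `g_{i+1,j} ∈ x_{i+1}·g_{i,j}` and `g_{i,j+1} ∈ g_{i,j}·y_{j+1}`. -/
theorem octant_construction {K : Type*} (op : K → K → Set K)
    (hP : ∀ x y z : K, setR op (op x y) z ⊆ setL op x (op y z))
    (hS : ∀ x y z : K, setR op (op x y) z ⊆ setL op y (op x z))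
    (k : ℕ) (hk : 1 ≤ k) (d h x y : ℕ → K)
    (hstair : ∀ i, i < k → h (i + 1) ∈ op (d i) (x (i + 1)) ∧
      d (i + 1) ∈ op (h (i + 1)) (y (i + 1))) :
    ∃ g : ℕ → ℕ → K,
      (∀ i, i ≤ k → g i i = d i) ∧
      (∀ i j, i + 1 ≤ j → j ≤ k → g (i + 1) j ∈ op (x (i + 1)) (g i j)) ∧
      (∀ i j, i ≤ j → j < k → g i (j + 1) ∈ op (g i j) (y (j + 1))) :=
  octant_construction_general op hP hS k d h x y hstair
end

section
/- Define the two-element structure K = {n, a} with N = {n} and · : K×K → 𝒫(K) given by n·n = {n}, n·a = {a}, a·n = ∅, a·a = ∅. Then (K,·,N) is a Routley–Meyer frame (it satisfies reflexivity, transitivity, upset and down-down-up), it satisfies (h) x·y ⊆ x·(x·y), (p) (x·y)·z ⊆ x·(y·z) and (s) (x·y)·z ⊆ y·(x·z) for all x,y,z ∈ K, but it does not satisfy x ∈ x·x for all x ∈ K (indeed a ∉ a·a). -/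
/-- The two-element structure `K = {n, a}`, realized on `Bool` with `n = false` and
`a = true`: `n·n = {n}`, `n·a = {a}`, `a·n = ∅`, `a·a = ∅`. -/
def op2 : Bool → Bool → Set Bool
  | false, false => {false}
  | false, true => {true}
  | true, _ => ∅

/-!
Since `n·x = {x}` and `a·x = ∅`, the order `x ≤ y` of this frame is equality, and every frame
condition holds for any frame with a discrete order. A set `X·z` is nonempty only when `n ∈ X`,
and `n ∈ x·y` forces `x = y = n`, which makes (p) and (s) immediate.
-/

theorem isRM_of_rmle_iff_eq {K : Type*} {op : K → K → Set K} {N : Set K}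
    (hle : ∀ x y, RMle op N x y ↔ y = x) : IsRM op N := by
  refine ⟨fun x ↦ (hle x x).2 rfl, fun x y z hxy hyz ↦ (hle x z).2 ?_,
    fun n m hn hnm ↦ (hle n m).1 hnm ▸ hn, ?_⟩
  · rw [(hle y z).1 hyz, (hle x y).1 hxy]
  · intro x y z x' y' z' hz hx hy hz'
    rwa [← (hle x' x).1 hx, ← (hle y' y).1 hy, (hle z z').1 hz']

theorem mem_op2 {u x y : Bool} : u ∈ op2 x y ↔ x = false ∧ u = y := by
  cases x <;> cases y <;> simp [op2]

theorem rmle_op2_iff {x y : Bool} : RMle op2 {false} x y ↔ y = x := by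
  simp [RMle, mem_op2]

theorem mem_setL_op2 {u x : Bool} {Y : Set Bool} : u ∈ setL op2 x Y ↔ x = false ∧ u ∈ Y := by
  simp [setL, mem_op2]

theorem mem_setR_op2 {u z : Bool} {X : Set Bool} : u ∈ setR op2 X z ↔ false ∈ X ∧ u = z := by
  simp [setR, mem_op2]

theorem op2_subset_setL_op2 (x y : Bool) : op2 x y ⊆ setL op2 x (op2 x y) := fun _ hu ↦
  mem_setL_op2.2 ⟨(mem_op2.1 hu).1, hu⟩

theorem false_mem_op2_iff {x y : Bool} : false ∈ op2 x y ↔ x = false ∧ y = false := by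
  rw [mem_op2, eq_comm (a := false)]

theorem setR_op2_subset_setL_op2 (x y z : Bool) :
    setR op2 (op2 x y) z ⊆ setL op2 x (op2 y z) := by
  intro u hu
  obtain ⟨hxy, rfl⟩ := mem_setR_op2.1 hu
  obtain ⟨rfl, rfl⟩ := false_mem_op2_iff.1 hxy
  exact mem_setL_op2.2 ⟨rfl, mem_op2.2 ⟨rfl, rfl⟩⟩

theorem setR_op2_subset_setL_op2_comm (x y z : Bool) :
    setR op2 (op2 x y) z ⊆ setL op2 y (op2 x z) := by
  intro u hu
  obtain ⟨hxy, rfl⟩ := mem_setR_op2.1 hu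
  obtain ⟨rfl, rfl⟩ := false_mem_op2_iff.1 hxy
  exact mem_setL_op2.2 ⟨rfl, mem_op2.2 ⟨rfl, rfl⟩⟩

theorem true_notMem_op2_true_true : true ∉ op2 true true := fun h ↦
  Bool.noConfusion (mem_op2.1 h).1

/-- `({n,a}, ·, {n})` is a Routley–Meyer frame satisfying (h), (p) and (s),
but not `x ∈ x·x` for all `x`; indeed `a ∉ a·a`. -/
theorem two_element_counterexample :
    IsRM op2 {false} ∧
    (∀ x y : Bool, op2 x y ⊆ setL op2 x (op2 x y)) ∧
    (∀ x y z : Bool, setR op2 (op2 x y) z ⊆ setL op2 x (op2 y z)) ∧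
    (∀ x y z : Bool, setR op2 (op2 x y) z ⊆ setL op2 y (op2 x z)) ∧
    ¬ (∀ x : Bool, x ∈ op2 x x) ∧
    true ∉ op2 true true :=
  ⟨isRM_of_rmle_iff_eq fun _ _ ↦ rmle_op2_iff, op2_subset_setL_op2,
    setR_op2_subset_setL_op2, setR_op2_subset_setL_op2_comm,
    fun h ↦ true_notMem_op2_true_true (h true), true_notMem_op2_true_true⟩
end

section
/- Let (𝒫_fin(ℕ), ∪) be the finite subsets of ℕ under union, and let (ℕ², ·) be the structure where (m'',n'') ∈ (m,n)·(m',n') iff max{m,m'} ≤ m'' ≤ m+m' and max{n,n'} ≤ n'' ≤ n+n'. Then the map f : 𝒫_fin(ℕ) → ℕ² given by f(X) := (|X ∩ 2ℕ|, |X ∩ (2ℕ+1)|), where 2ℕ is the set of even and 2ℕ+1 the set of odd natural numbers, is a p-morphism from (𝒫_fin(ℕ), ∪) to (ℕ², ·), where the operation on 𝒫_fin(ℕ) is X·Y := {X ∪ Y}. -/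
/-- A p-morphism between structures `(K, ·)` and `(K', ·')`. -/
def IsPMorphism {K K' : Type*} (op : K → K → Set K) (op' : K' → K' → Set K')
    (f : K → K') : Prop :=
  (∀ x y z : K, z ∈ op x y → f z ∈ op' (f x) (f y)) ∧
  (∀ (x : K) (y' z' : K'), z' ∈ op' (f x) y' →
    ∃ y z : K, f y = y' ∧ f z = z' ∧ z ∈ op x y)

/-- The operation on `ℕ²`: `(m'',n'') ∈ (m,n)·(m',n')` iff
`max m m' ≤ m'' ≤ m + m'` and `max n n' ≤ n'' ≤ n + n'`. -/
def opN2 (p q : ℕ × ℕ) : Set (ℕ × ℕ) :=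
  {r | max p.1 q.1 ≤ r.1 ∧ r.1 ≤ p.1 + q.1 ∧ max p.2 q.2 ≤ r.2 ∧ r.2 ≤ p.2 + q.2}

/-- `f(X) = (|X ∩ 2ℕ|, |X ∩ (2ℕ+1)|)`: the number of even and of odd elements of `X`. -/
def parityCount (X : Finset ℕ) : ℕ × ℕ :=
  ((X.filter fun n => Even n).card, (X.filter fun n => Odd n).card)


/-!
Forth: the even (odd) part of `X ∪ Y` is the union of those of `X` and `Y`, so its size lies
between the larger of the two sizes and their sum.

Back: the parities can be treated separately. To realise sizes `a` for `Y` and `c` for `X ∪ Y`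
within one parity class, where `X` has `e` elements, let `Y` share `e + a - c` elements with `X`
and add `c - e` fresh elements of that parity; fresh ones exist because each class is infinite.
-/

open Finset

namespace Finset

variable {α : Type*} [DecidableEq α]

theorem max_card_le_card_union (s t : Finset α) : max #s #t ≤ #(s ∪ t) :=
  max_le (card_le_card subset_union_left) (card_le_card subset_union_right)

theorem filter_union_eq_left {p : α → Prop} [DecidablePred p] {s t : Finset α}
    (hs : ∀ a ∈ s, p a) (ht : ∀ a ∈ t, ¬p a) : (s ∪ t).filter p = s := by
  rw [filter_union, filter_true_of_mem hs, filter_false_of_mem ht, union_empty]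

end Finset

theorem Set.Infinite.exists_card_eq_card_union_eq {α : Type*} [DecidableEq α] {s : Set α}
    (hs : s.Infinite) {E : Finset α} (hE : ↑E ⊆ s) {a c : ℕ} (hEc : #E ≤ c) (hac : a ≤ c)
    (hcE : c ≤ #E + a) : ∃ Y : Finset α, ↑Y ⊆ s ∧ #Y = a ∧ #(E ∪ Y) = c := by
  obtain ⟨A, hAE, hA⟩ := E.exists_subset_card_eq (show #E + a - c ≤ #E by omega)
  obtain ⟨F, hF, hFc⟩ := (hs.sdiff E.finite_toSet).exists_subset_card_eq (c - #E)
  have hEF : Disjoint E F := Finset.disjoint_left.2 fun _ hxE hxF => (hF hxF).2 hxE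
  refine ⟨A ∪ F, ?_, ?_, ?_⟩
  · rw [coe_union]
    exact Set.union_subset ((Finset.coe_subset.2 hAE).trans hE) (hF.trans Set.sdiff_subset)
  · rw [card_union_of_disjoint (hEF.mono_left hAE), hA, hFc]
    omega
  · rw [← Finset.union_assoc, Finset.union_eq_left.2 hAE, card_union_of_disjoint hEF, hFc]
    omega

theorem Nat.infinite_setOf_even : {n : ℕ | Even n}.Infinite :=
  Set.infinite_of_forall_exists_gt fun n => ⟨2 * n + 2, ⟨n + 1, by ring⟩, by omega⟩

theorem Nat.infinite_setOf_odd : {n : ℕ | Odd n}.Infinite :=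
  Set.infinite_of_forall_exists_gt fun n => ⟨2 * n + 1, ⟨n, rfl⟩, by omega⟩

theorem parityCount_union (X Y : Finset ℕ) :
    parityCount (X ∪ Y) =
      (#(X.filter (fun n => Even n) ∪ Y.filter (fun n => Even n)),
        #(X.filter (fun n => Odd n) ∪ Y.filter (fun n => Odd n))) := by
  simp only [parityCount, filter_union]

theorem parityCount_union_mem_opN2 (X Y : Finset ℕ) :
    parityCount (X ∪ Y) ∈ opN2 (parityCount X) (parityCount Y) := by
  rw [parityCount_union]
  exact ⟨max_card_le_card_union _ _, card_union_le _ _,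
    max_card_le_card_union _ _, card_union_le _ _⟩

theorem filter_even_union_filter_odd_union {E O : Finset ℕ} (hE : ∀ n ∈ E, Even n)
    (hO : ∀ n ∈ O, Odd n) : (E ∪ O).filter (fun n => Even n) = E ∧
      (E ∪ O).filter (fun n => Odd n) = O := by
  have hE' : ∀ n ∈ E, ¬Odd n := fun n hn => Nat.not_odd_iff_even.2 (hE n hn)
  have hO' : ∀ n ∈ O, ¬Even n := fun n hn => Nat.not_even_iff_odd.2 (hO n hn)
  exact ⟨filter_union_eq_left hE hO', union_comm E O ▸ filter_union_eq_left hO hE'⟩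

/-- `parityCount` is a p-morphism from `(𝒫_fin(ℕ), ∪)` (with
`X·Y = {X ∪ Y}`) to `(ℕ², ·)`. -/
theorem parityCount_pmorphism :
    IsPMorphism (fun X Y : Finset ℕ => ({X ∪ Y} : Set (Finset ℕ))) opN2 parityCount := by
  refine ⟨fun X Y Z (hZ : Z = X ∪ Y) => hZ ▸ parityCount_union_mem_opN2 X Y, ?_⟩
  rintro X ⟨m', n'⟩ ⟨m'', n''⟩ ⟨hm, hm'', hn, hn''⟩
  simp only [parityCount, max_le_iff] at hm hm'' hn hn''
  obtain ⟨YE, hYE, rfl, rfl⟩ := Nat.infinite_setOf_even.exists_card_eq_card_union_eq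
    (E := X.filter (fun n => Even n)) (fun n hn => (mem_filter.1 hn).2) hm.1 hm.2 hm''
  obtain ⟨YO, hYO, rfl, rfl⟩ := Nat.infinite_setOf_odd.exists_card_eq_card_union_eq
    (E := X.filter (fun n => Odd n)) (fun n hn => (mem_filter.1 hn).2) hn.1 hn.2 hn''
  obtain ⟨hEven, hOdd⟩ :=
    filter_even_union_filter_odd_union (fun n hn => hYE hn) (fun n hn => hYO hn)
  exact ⟨YE ∪ YO, X ∪ (YE ∪ YO), by simp only [parityCount, hEven, hOdd],
    by simp only [parityCount, filter_union, hEven, hOdd], rfl⟩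
end
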